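/- Let d be a positive natural number, let f : ℝ^d → ℝ be twice continuously differentiable, let W* ∈ ℝ^d satisfy ∇f(W*) = 0, and let δ > 0 and U = {W : ‖W − W*‖ ≤ δ}. Assume the Hessian of f is L_H-Lipschitz on U in operator norm. Let H = ∇²f(W*), let W_Pre ∈ ℝ^d be fixed, and let θ be a random vector with W_Pre + θ ∈ U almost surely, mean μ = E[θ], and covariance matrix Σ = E[(θ − μ)(θ − μ)ᵀ]. Then E[f(W_Pre + θ)] − f(W*) ≤ (1/2)·(W_Pre + μ − W*)ᵀ H (W_Pre + μ − W*) + (1/2)·tr(H Σ) + (L_H/6)·δ·( ‖W_Pre + μ − W*‖² + tr(Σ) ). -/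

import Mathlib

/-!
Taylor's formula with integral remainder at the stationary point `W*`, together with the
`L_H`-Lipschitz bound on the Hessian along the segment, gives for every `w` in the basin
`f w - f W* ≤ ½ (w - W*)ᵀ H (w - W*) + (L_H / 6) ‖w - W*‖³`, and `‖w - W*‖ ≤ δ` turns the cubic
term into `(L_H δ / 6) ‖w - W*‖²`. Both terms are quadratic forms in `v = W_Pre + θ - W*`, and
`E[vᵀ A v] = E[v]ᵀ A E[v] + tr(A Σ)`; taking `A = H` and `A = 1` gives the bound.
-/

open MeasureTheory Matrix ProbabilityTheory

section Taylor

variable {E : Type*} [NormedAddCommGroup E] [NormedSpace ℝ E] {f : E → ℝ}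

lemma sub_sub_fderiv_eq_integral (hf : ContDiff ℝ 2 f) (x v : E) :
    f (x + v) - f x - fderiv ℝ f x v =
      ∫ t in (0 : ℝ)..1, (1 - t) * fderiv ℝ (fderiv ℝ f) (x + t • v) v v := by
  have hf' : ContDiff ℝ 1 (fderiv ℝ f) := hf.fderiv_right (by norm_num)
  have hline : ∀ t : ℝ, HasDerivAt (fun s : ℝ => x + s • v) v t := fun t => by
    simpa using ((hasDerivAt_id t).smul_const v).const_add x
  have hprim : ∀ t : ℝ, HasDerivAt
      (fun s : ℝ => f (x + s • v) + (1 - s) * fderiv ℝ f (x + s • v) v)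
      ((1 - t) * fderiv ℝ (fderiv ℝ f) (x + t • v) v v) t := fun t => by
    have hf_line := (hf.differentiable (by norm_num) _).hasFDerivAt.comp_hasDerivAt t (hline t)
    have hf'_line := ((ContinuousLinearMap.apply ℝ ℝ v).hasFDerivAt.comp _
      (hf'.differentiable (by norm_num) _).hasFDerivAt).comp_hasDerivAt t (hline t)
    refine (hf_line.add (((hasDerivAt_id t).const_sub 1).mul hf'_line)).congr_deriv ?_
    simp only [Function.comp_apply, ContinuousLinearMap.coe_comp, ContinuousLinearMap.apply_apply,
      id]
    ring
  have hcont : Continuous fun t : ℝ => (1 - t) * fderiv ℝ (fderiv ℝ f) (x + t • v) v v := by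
    have := (hf'.continuous_fderiv (by norm_num))
    fun_prop
  rw [intervalIntegral.integral_eq_sub_of_hasDerivAt (fun t _ => hprim t)
    (hcont.intervalIntegrable 0 1)]
  simp only [one_smul, sub_self, zero_mul, add_zero, zero_smul, sub_zero, one_mul]
  ring

lemma abs_sub_sub_fderiv_sub_le (hf : ContDiff ℝ 2 f) {s : Set E} (hs : Convex ℝ s) {LH : ℝ}
    (hLip : ∀ x ∈ s, ∀ y ∈ s,
      ‖fderiv ℝ (fderiv ℝ f) x - fderiv ℝ (fderiv ℝ f) y‖ ≤ LH * ‖x - y‖)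
    {x y : E} (hx : x ∈ s) (hy : y ∈ s) :
    |f y - f x - fderiv ℝ f x (y - x) - 1 / 2 * fderiv ℝ (fderiv ℝ f) x (y - x) (y - x)|
      ≤ LH / 6 * ‖y - x‖ ^ 3 := by
  have htaylor := sub_sub_fderiv_eq_integral hf x (y - x)
  rw [add_sub_cancel] at htaylor
  set D2 := fderiv ℝ (fderiv ℝ f)
  set v := y - x
  have hD2 : Continuous D2 :=
    (hf.fderiv_right (m := 1) (by norm_num)).continuous_fderiv (by norm_num)
  have hremainder : f y - f x - fderiv ℝ f x v - 1 / 2 * D2 x v v =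
      ∫ t in (0 : ℝ)..1, (1 - t) * (D2 (x + t • v) - D2 x) v v := by
    have h_half : ∫ t in (0 : ℝ)..1, (1 - t) = 1 / 2 := by
      rw [intervalIntegral.integral_comp_sub_left (fun t => t)]
      norm_num
    simp only [_root_.sub_apply, mul_sub]
    rw [intervalIntegral.integral_sub (Continuous.intervalIntegrable (by fun_prop) _ _)
      (Continuous.intervalIntegrable (by fun_prop) _ _), intervalIntegral.integral_mul_const,
      h_half, htaylor]
  have hbound : ∀ t ∈ Set.Ioc (0 : ℝ) 1,
      ‖(1 - t) * (D2 (x + t • v) - D2 x) v v‖ ≤ LH * ‖v‖ ^ 3 * ((1 - t) * t) := by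
    rintro t ⟨ht0, ht1⟩
    have hLip_t : ‖D2 (x + t • v) - D2 x‖ ≤ LH * (t * ‖v‖) := by
      simpa [norm_smul, abs_of_pos ht0] using
        hLip _ (hs.add_smul_sub_mem hx hy ⟨ht0.le, ht1⟩) x hx
    calc ‖(1 - t) * (D2 (x + t • v) - D2 x) v v‖
        = (1 - t) * ‖(D2 (x + t • v) - D2 x) v v‖ := by
          rw [norm_mul, Real.norm_of_nonneg (by linarith)]
      _ ≤ (1 - t) * (LH * (t * ‖v‖) * ‖v‖ * ‖v‖) := by
          refine mul_le_mul_of_nonneg_left ?_ (by linarith)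
          exact ((D2 (x + t • v) - D2 x).le_opNorm₂ v v).trans (by gcongr)
      _ = LH * ‖v‖ ^ 3 * ((1 - t) * t) := by ring
  rw [hremainder, ← Real.norm_eq_abs]
  refine (intervalIntegral.norm_integral_le_of_norm_le zero_le_one
    (Filter.Eventually.of_forall hbound)
    (Continuous.intervalIntegrable (by fun_prop) _ _)).trans_eq ?_
  have h_beta : ∫ t in (0 : ℝ)..1, (1 - t) * t = 1 / 6 := by
    norm_num [sub_mul, ← sq, intervalIntegral.integral_sub, integral_pow]
  rw [intervalIntegral.integral_const_mul, h_beta]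
  ring

lemma sub_sub_fderiv_le_of_mem_closedBall (hf : ContDiff ℝ 2 f) {x : E} {δ LH : ℝ}
    (hLip : ∀ y ∈ Metric.closedBall x δ, ∀ z ∈ Metric.closedBall x δ,
      ‖fderiv ℝ (fderiv ℝ f) y - fderiv ℝ (fderiv ℝ f) z‖ ≤ LH * ‖y - z‖)
    {y : E} (hy : y ∈ Metric.closedBall x δ) :
    f y - f x - fderiv ℝ f x (y - x)
      ≤ 1 / 2 * fderiv ℝ (fderiv ℝ f) x (y - x) (y - x) + LH / 6 * δ * ‖y - x‖ ^ 2 := by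
  have hx : x ∈ Metric.closedBall x δ := Metric.mem_closedBall_self (dist_nonneg.trans hy)
  have hTaylor := abs_le.mp (abs_sub_sub_fderiv_sub_le hf (convex_closedBall x δ) hLip hx hy)
  have hyx : ‖y - x‖ ≤ δ := by rwa [← dist_eq_norm]
  -- `LH` itself need not be nonnegative: the ball may be a single point
  have hLH : 0 ≤ LH * ‖y - x‖ := le_trans (by positivity) (hLip y hy x hx)
  nlinarith [mul_nonneg (mul_nonneg hLH (sub_nonneg.mpr hyx)) (norm_nonneg (y - x))]

end Taylor

lemma ContinuousLinearMap.apply_apply_eq_dotProduct_mulVec {ι : Type*} [Fintype ι]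
    [DecidableEq ι] (B : EuclideanSpace ℝ ι →L[ℝ] EuclideanSpace ℝ ι →L[ℝ] ℝ)
    (x y : EuclideanSpace ℝ ι) :
    B x y = x ⬝ᵥ (Matrix.of fun i j => B (EuclideanSpace.single i 1) (EuclideanSpace.single j 1))
      *ᵥ y := by
  have h := LinearMap.sum_repr_mul_repr_mul (EuclideanSpace.basisFun ι ℝ).toBasis
    (EuclideanSpace.basisFun ι ℝ).toBasis (B := B.toLinearMap₁₂) x y
  simp only [OrthonormalBasis.coe_toBasis, EuclideanSpace.basisFun_apply,
    toLinearMap₁₂_apply_apply_apply, smul_eq_mul, Finsupp.sum_fintype,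
    OrthonormalBasis.coe_toBasis_repr_apply, EuclideanSpace.basisFun_repr, zero_mul, mul_zero,
    implies_true, Finset.sum_const_zero] at h
  simp only [← h, dotProduct, mulVec, of_apply, Finset.mul_sum, mul_comm]

section QuadraticForm

variable {Ω ι : Type*} [MeasurableSpace Ω] {P : Measure Ω} [Fintype ι] {X : Ω → ι → ℝ}

lemma dotProduct_mulVec_eq_sum (A : Matrix ι ι ℝ) (x : ι → ℝ) :
    x ⬝ᵥ A *ᵥ x = ∑ i, ∑ j, A i j * (x i * x j) := by
  simp only [dotProduct, mulVec, Finset.mul_sum]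
  exact Finset.sum_congr rfl fun i _ => Finset.sum_congr rfl fun j _ => by ring

lemma integrable_dotProduct_mulVec (A : Matrix ι ι ℝ) (hX : ∀ i, MemLp (X · i) 2 P) :
    Integrable (fun ω => X ω ⬝ᵥ A *ᵥ X ω) P := by
  simp only [dotProduct_mulVec_eq_sum]
  exact integrable_finsetSum _ fun i _ => integrable_finsetSum _ fun j _ =>
    ((hX i).integrable_mul (hX j)).const_mul _

lemma integral_dotProduct_mulVec [IsProbabilityMeasure P] (A : Matrix ι ι ℝ)
    (hX : ∀ i, MemLp (X · i) 2 P) :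
    ∫ ω, X ω ⬝ᵥ A *ᵥ X ω ∂P = (fun i => ∫ ω, X ω i ∂P) ⬝ᵥ A *ᵥ (fun i => ∫ ω, X ω i ∂P)
      + (A * Matrix.of fun i j => cov[(X · i), (X · j); P]).trace := by
  have hprod : ∀ i j, Integrable (fun ω => A i j * (X ω i * X ω j)) P := fun i j =>
    ((hX i).integrable_mul (hX j)).const_mul _
  have hmoment : ∀ i j, ∫ ω, X ω i * X ω j ∂P
      = (∫ ω, X ω i ∂P) * (∫ ω, X ω j ∂P) + cov[(X · i), (X · j); P] := fun i j => by
    rw [covariance_eq_sub (hX i) (hX j)]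
    simp only [Pi.mul_apply]
    ring
  simp_rw [dotProduct_mulVec_eq_sum A (X _)]
  rw [integral_finsetSum _ fun i _ => integrable_finsetSum _ fun j _ => hprod i j]
  simp only [integral_finsetSum _ fun j _ => hprod _ j, integral_const_mul, hmoment, mul_add,
    Finset.sum_add_distrib, dotProduct_mulVec_eq_sum, trace, diag, mul_apply, of_apply,
    covariance_comm (X · _) (X · _)]

lemma integral_add_const_dotProduct_mulVec [IsProbabilityMeasure P] (A : Matrix ι ι ℝ)
    {θ : Ω → EuclideanSpace ℝ ι} (hθ : MemLp θ 2 P) (c : EuclideanSpace ℝ ι) :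
    ∫ ω, ⇑(θ ω + c) ⬝ᵥ A *ᵥ ⇑(θ ω + c) ∂P
      = ⇑((∫ ω, θ ω ∂P) + c) ⬝ᵥ A *ᵥ ⇑((∫ ω, θ ω ∂P) + c)
        + (A * Matrix.of fun i j =>
            ∫ ω, (θ ω i - (∫ ω, θ ω ∂P) i) * (θ ω j - (∫ ω, θ ω ∂P) j) ∂P).trace := by
  have hθi : ∀ i, Integrable (θ · i) P := fun i =>
    (memLp_piLp_iff.1 hθ i).integrable one_le_two
  have hmean : ∀ i, ∫ ω, θ ω i ∂P = (∫ ω, θ ω ∂P) i := fun i =>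
    (eval_integral_piLp hθi i).symm
  have hmean_add : (fun i => ∫ ω, (θ ω + c) i ∂P) = ⇑((∫ ω, θ ω ∂P) + c) := by
    ext i
    simp only [PiLp.add_apply]
    rw [integral_add (hθi i) (integrable_const _), integral_const, hmean]
    simp
  have hcov_add : ∀ i j, cov[fun ω => (θ ω + c) i, fun ω => (θ ω + c) j; P]
      = ∫ ω, (θ ω i - (∫ ω, θ ω ∂P) i) * (θ ω j - (∫ ω, θ ω ∂P) j) ∂P := fun i j => by
    simp only [PiLp.add_apply]
    rw [covariance_add_const_left (hθi i), covariance_add_const_right (hθi j), covariance]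
    simp only [hmean]
  rw [integral_dotProduct_mulVec A (X := fun ω => ⇑(θ ω + c))
    (memLp_piLp_iff.1 (hθ.add (memLp_const c))), hmean_add]
  simp only [hcov_add]

end QuadraticForm

section BoundedRandomVariable

variable {Ω E : Type*} [MeasurableSpace Ω] {P : Measure Ω} [IsFiniteMeasure P] {Y : Ω → E}

lemma memLp_of_ae_mem_closedBall [NormedAddCommGroup E] (hY : AEStronglyMeasurable Y P) {b : E}
    {r : ℝ} (h : ∀ᵐ ω ∂P, Y ω ∈ Metric.closedBall b r) (p : ENNReal) : MemLp Y p P :=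
  MemLp.of_bound hY (‖b‖ + r) (h.mono fun _ => norm_le_of_mem_closedBall)

lemma integrable_comp_of_ae_mem_isCompact [TopologicalSpace E] {F : Type*} [NormedAddCommGroup F]
    {g : E → F} (hg : Continuous g) {K : Set E} (hK : IsCompact K) (hY : AEStronglyMeasurable Y P)
    (h : ∀ᵐ ω ∂P, Y ω ∈ K) : Integrable (fun ω => g (Y ω)) P := by
  obtain ⟨C, hC⟩ := hK.exists_bound_of_continuousOn hg.continuousOn
  exact Integrable.of_bound (hg.comp_aestronglyMeasurable hY) C (h.mono fun ω hω => hC _ hω)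

end BoundedRandomVariable

lemma EuclideanSpace.norm_sq_eq_dotProduct_one_mulVec {ι : Type*} [Fintype ι] [DecidableEq ι]
    (x : EuclideanSpace ℝ ι) :
    ‖x‖ ^ 2 = x ⬝ᵥ (1 : Matrix ι ι ℝ) *ᵥ x := by
  rw [one_mulVec, ← real_inner_self_eq_norm_sq, EuclideanSpace.inner_eq_star_dotProduct]
  simp

theorem stmt_1_general (d : ℕ)
    (f : EuclideanSpace ℝ (Fin d) → ℝ) (hf : ContDiff ℝ 2 f)
    (Wstar : EuclideanSpace ℝ (Fin d)) (hstat : fderiv ℝ f Wstar = 0)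
    (δ : ℝ) (LH : ℝ)
    (hLip : ∀ x ∈ Metric.closedBall Wstar δ, ∀ y ∈ Metric.closedBall Wstar δ,
      ‖fderiv ℝ (fderiv ℝ f) x - fderiv ℝ (fderiv ℝ f) y‖ ≤ LH * ‖x - y‖)
    (H : Matrix (Fin d) (Fin d) ℝ)
    (hH : H = Matrix.of fun i j =>
      fderiv ℝ (fderiv ℝ f) Wstar (EuclideanSpace.single i 1) (EuclideanSpace.single j 1))
    (WPre : EuclideanSpace ℝ (Fin d))
    {Ω : Type} [MeasureSpace Ω] [IsProbabilityMeasure (volume : Measure Ω)]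
    (θ : Ω → EuclideanSpace ℝ (Fin d)) (hθ : Measurable θ)
    (hbasin : ∀ᵐ ω, WPre + θ ω ∈ Metric.closedBall Wstar δ)
    (μ : EuclideanSpace ℝ (Fin d)) (hμ : μ = ∫ ω, θ ω)
    (Cov : Matrix (Fin d) (Fin d) ℝ)
    (hCov : Cov = Matrix.of fun i j => ∫ ω, (θ ω i - μ i) * (θ ω j - μ j)) :
    (∫ ω, f (WPre + θ ω)) - f Wstar ≤
      1 / 2 * ((WPre + μ - Wstar) ⬝ᵥ H.mulVec (WPre + μ - Wstar))
        + 1 / 2 * (H * Cov).trace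
        + LH / 6 * δ * (‖WPre + μ - Wstar‖ ^ 2 + Cov.trace) := by
  have hshift : ∀ x, WPre + x - Wstar = x + (WPre - Wstar) := fun x => by abel
  set q : Matrix (Fin d) (Fin d) ℝ → Ω → ℝ := fun A ω =>
    ⇑(θ ω + (WPre - Wstar)) ⬝ᵥ A *ᵥ ⇑(θ ω + (WPre - Wstar))
  have hθ_memLp : MemLp θ 2 :=
    memLp_of_ae_mem_closedBall (b := Wstar - WPre) hθ.aestronglyMeasurable
      (hbasin.mono fun ω hω => by rw [← preimage_add_closedBall]; exact hω) 2
  have hq_int : ∀ A, Integrable (q A) := fun A =>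
    integrable_dotProduct_mulVec A (memLp_piLp_iff.1 (hθ_memLp.add (memLp_const _)))
  have hf_int : Integrable fun ω => f (WPre + θ ω) := integrable_comp_of_ae_mem_isCompact
    hf.continuous (isCompact_closedBall Wstar δ) (hθ.const_add WPre).aestronglyMeasurable hbasin
  have hTaylor : ∀ᵐ ω, f (WPre + θ ω) - f Wstar ≤ 1 / 2 * q H ω + LH / 6 * δ * q 1 ω := by
    filter_upwards [hbasin] with ω hω
    have h := sub_sub_fderiv_le_of_mem_closedBall hf hLip hω
    rwa [hstat, _root_.zero_apply, sub_zero,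
      ContinuousLinearMap.apply_apply_eq_dotProduct_mulVec, ← hH,
      EuclideanSpace.norm_sq_eq_dotProduct_one_mulVec, hshift] at h
  calc (∫ ω, f (WPre + θ ω)) - f Wstar = ∫ ω, (f (WPre + θ ω) - f Wstar) := by
        rw [integral_sub hf_int (integrable_const _), integral_const]; simp
    _ ≤ ∫ ω, (1 / 2 * q H ω + LH / 6 * δ * q 1 ω) :=
        integral_mono_ae (hf_int.sub (integrable_const _))
          (((hq_int H).const_mul _).add ((hq_int 1).const_mul _)) hTaylor
    _ = _ := by
        rw [integral_add ((hq_int H).const_mul _) ((hq_int 1).const_mul _), integral_const_mul,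
          integral_const_mul, integral_add_const_dotProduct_mulVec H hθ_memLp,
          integral_add_const_dotProduct_mulVec 1 hθ_memLp, ← hμ, ← hCov, ← hshift,
          EuclideanSpace.norm_sq_eq_dotProduct_one_mulVec, one_mul]
        simp only [WithLp.ofLp_add, WithLp.ofLp_sub]
        ring

/-- Intermediate bound in the proof of Theorem 1 of the paper, before applying the
Hessian upper bound `H ⪯ L·I`.  Here `H = ∇²f(W*)` (as a matrix in the standard basis),
`Σ` is the covariance matrix of the random vector `θ`, and the Hessian of `f` is
`L_H`-Lipschitz (in operator norm) on the closed ball `U` of radius `δ` around the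
stationary point `W*`. -/
theorem stmt_1 (d : ℕ) (hd : 0 < d)
    (f : EuclideanSpace ℝ (Fin d) → ℝ) (hf : ContDiff ℝ 2 f)
    (Wstar : EuclideanSpace ℝ (Fin d)) (hstat : fderiv ℝ f Wstar = 0)
    (δ : ℝ) (hδ : 0 < δ) (LH : ℝ)
    (hLip : ∀ x ∈ Metric.closedBall Wstar δ, ∀ y ∈ Metric.closedBall Wstar δ,
      ‖fderiv ℝ (fderiv ℝ f) x - fderiv ℝ (fderiv ℝ f) y‖ ≤ LH * ‖x - y‖)
    (H : Matrix (Fin d) (Fin d) ℝ)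
    (hH : H = Matrix.of fun i j =>
      fderiv ℝ (fderiv ℝ f) Wstar (EuclideanSpace.single i 1) (EuclideanSpace.single j 1))
    (WPre : EuclideanSpace ℝ (Fin d))
    {Ω : Type} [MeasureSpace Ω] [IsProbabilityMeasure (volume : Measure Ω)]
    (θ : Ω → EuclideanSpace ℝ (Fin d)) (hθ : Measurable θ)
    (hbasin : ∀ᵐ ω, WPre + θ ω ∈ Metric.closedBall Wstar δ)
    (μ : EuclideanSpace ℝ (Fin d)) (hμ : μ = ∫ ω, θ ω)
    (Cov : Matrix (Fin d) (Fin d) ℝ)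
    (hCov : Cov = Matrix.of fun i j => ∫ ω, (θ ω i - μ i) * (θ ω j - μ j)) :
    (∫ ω, f (WPre + θ ω)) - f Wstar ≤
      1 / 2 * ((WPre + μ - Wstar) ⬝ᵥ H.mulVec (WPre + μ - Wstar))
        + 1 / 2 * (H * Cov).trace
        + LH / 6 * δ * (‖WPre + μ - Wstar‖ ^ 2 + Cov.trace) :=
  stmt_1_general d f hf Wstar hstat δ LH hLip H hH WPre θ hθ hbasin μ hμ Cov hCov
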